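/- Let σ be the logistic function and r > 0, c, d ∈ ℝ. Define the Negative Binomial hurdle kernel: p(0, θ) = 1 − σ(c + θ) and p(y, θ) = σ(c + θ) · C(y−1+r−1, y−1) (1 − σ(d + θ/r))^r σ(d + θ/r)^{y−1} for y ≥ 1. Then for every y ∈ ℤ≥0, the ratio θ ↦ p(y+1, θ)/p(y, θ) is nondecreasing in θ. -/

import Mathlib

open Real

noncomputable def logistic (x : ℝ) : ℝ := (1 + Real.exp (-x))⁻¹

/-!
For `y ≥ 1` the ratio `p (y + 1) θ / p y θ` is the constant `(y - 1 + r) / y` times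
`σ (d + θ / r)`. For `y = 0` it is `exp (c + θ) * (1 - σ (d + θ / r)) ^ r`, and the identity
`1 - σ x = exp (-x) * σ x` turns this into `exp (c - r * d) * σ (d + θ / r) ^ r`.
Both are nondecreasing because `σ` is.
-/

theorem logistic_eq_sigmoid : logistic = sigmoid := rfl

theorem logistic_pos (x : ℝ) : 0 < logistic x := sigmoid_pos x

theorem logistic_lt_one (x : ℝ) : logistic x < 1 := sigmoid_lt_one x

theorem logistic_monotone : Monotone logistic := sigmoid_monotone

theorem one_sub_logistic (x : ℝ) : 1 - logistic x = exp (-x) * logistic x := by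
  rw [logistic_eq_sigmoid, ← sigmoid_neg, ← sigmoid_mul_rexp_neg, mul_comm]

theorem logistic_div_one_sub_logistic (x : ℝ) : logistic x / (1 - logistic x) = exp x := by
  rw [one_sub_logistic, div_mul_cancel_right₀ (logistic_pos x).ne', exp_neg, inv_inv]

theorem one_sub_logistic_rpow (x r : ℝ) :
    (1 - logistic x) ^ r = exp (-(r * x)) * logistic x ^ r := by
  rw [one_sub_logistic, mul_rpow (exp_pos _).le (logistic_pos x).le, ← exp_mul, neg_mul,
    mul_comm x]

theorem gamma_add_div_factorial_succ {r : ℝ} (n : ℕ) (h : (n : ℝ) + r ≠ 0) :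
    Gamma ((n + 1 : ℕ) + r) / (Gamma r * (n + 1).factorial)
      = (n + r) / (n + 1) * (Gamma (n + r) / (Gamma r * n.factorial)) := by
  rw [Nat.factorial_succ, Nat.cast_mul, Nat.cast_succ, add_right_comm, Gamma_add_one h]
  field_simp

theorem mul_mul_mul_pow_succ_div {s k a A u : ℝ} (hs : s ≠ 0) (ha : a ≠ 0) (hA : A ≠ 0)
    (hu : u ≠ 0) (n : ℕ) : s * (k * a) * A * u ^ (n + 1) / (s * a * A * u ^ n) = k * u := by
  field_simp
  ring

/-- For the Negative Binomial hurdle kernel with comonotonic random effects,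
the ratio `θ ↦ p(y+1,θ)/p(y,θ)` is nondecreasing in `θ` for every `y ∈ ℤ≥0`. -/
theorem nb_hurdle_kernel_ratio_monotone
    (r : ℝ) (hr : 0 < r) (c d : ℝ)
    (p : ℕ → ℝ → ℝ)
    (hp0 : ∀ θ : ℝ, p 0 θ = 1 - logistic (c + θ))
    (hp1 : ∀ (n : ℕ) (θ : ℝ), p (n + 1) θ =
      logistic (c + θ) * (Real.Gamma ((n : ℝ) + r) /
        (Real.Gamma r * (Nat.factorial n))) *
        (1 - logistic (d + θ / r)) ^ (r : ℝ) *
        (logistic (d + θ / r)) ^ n) :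
    ∀ y : ℕ, Monotone (fun θ : ℝ => p (y + 1) θ / p y θ) := by
  have hσ : Monotone fun θ : ℝ => logistic (d + θ / r) :=
    logistic_monotone.comp (monotone_const.add (monotone_id.div_const hr.le))
  rintro (_ | n)
  · have hratio (θ : ℝ) : p 1 θ / p 0 θ = exp (c - r * d) * logistic (d + θ / r) ^ r := by
      rw [hp1 0, hp0, Nat.cast_zero, zero_add, Nat.factorial_zero, Nat.cast_one, mul_one,
        div_self (Gamma_pos_of_pos hr).ne', mul_one, pow_zero, mul_one, mul_div_right_comm,
        logistic_div_one_sub_logistic, one_sub_logistic_rpow, ← mul_assoc, ← exp_add]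
      congr 2
      field_simp
      ring
    simp only [hratio]
    exact fun a b hab => mul_le_mul_of_nonneg_left
      (rpow_le_rpow (logistic_pos _).le (hσ hab) hr.le) (exp_pos _).le
  · have hratio (θ : ℝ) :
        p (n + 1 + 1) θ / p (n + 1) θ = (n + r) / (n + 1) * logistic (d + θ / r) := by
      have hΓ := Gamma_pos_of_pos (by positivity : 0 < (n : ℝ) + r)
      have hA := rpow_pos_of_pos (sub_pos.2 (logistic_lt_one (d + θ / r))) r
      rw [hp1, hp1, gamma_add_div_factorial_succ n (by positivity)]
      exact mul_mul_mul_pow_succ_div (logistic_pos _).ne' (by positivity) hA.ne'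
        (logistic_pos _).ne' n
    simp only [hratio]
    exact hσ.const_mul (by positivity)
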